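/- arXiv:1702.01845 — 4 statements merged into one kernel-verified Lean document; each statement's English description precedes it below -/
import Mathlib

section
/- Let f be a frame function on quantum effects (values in [0,1], summing to 1 over every POVM). Then f is homogeneous over nonnegative rationals: for any effect E and nonnegative rational q such that qE is an effect, f(qE) = q f(E). -/
open Matrix
open scoped ComplexOrder

/-- An effect on a finite-dimensional Hilbert space: `0 ≤ E ≤ 1`. -/
def IsEffect {d : ℕ} (E : Matrix (Fin d) (Fin d) ℂ) : Prop :=
  E.PosSemidef ∧ (1 - E).PosSemidef

/-- A frame function on quantum effects: takes values in `[0,1]` on effects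
and sums to `1` over every POVM (finite family of effects summing to the identity). -/
def IsFrameFunction {d : ℕ} (f : Matrix (Fin d) (Fin d) ℂ → ℝ) : Prop :=
  (∀ E, IsEffect E → f E ∈ Set.Icc (0 : ℝ) 1) ∧
  ∀ (n : ℕ) (X : Fin n → Matrix (Fin d) (Fin d) ℂ),
    (∀ i, IsEffect (X i)) → (∑ i, X i = 1) → ∑ i, f (X i) = 1

/-!
A frame function is additive on effects whose sum is an effect, since `{A, B, C}`
and `{A + B, C}` with `C = 1 - A - B` are both POVMs. Hence `f (n • G) = n * f G`, and for
`q = a / b` one applies this to `G = b⁻¹ • E` twice: `E = b • G` and `q • E = a • G`.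
-/

namespace IsEffect

variable {d : ℕ} {A B E : Matrix (Fin d) (Fin d) ℂ}

lemma zero : IsEffect (0 : Matrix (Fin d) (Fin d) ℂ) :=
  ⟨PosSemidef.zero, by simpa using PosSemidef.one⟩

lemma one_sub (hE : IsEffect E) : IsEffect (1 - E) :=
  ⟨hE.2, by simpa using hE.1⟩

lemma of_add (hA : A.PosSemidef) (hB : B.PosSemidef) (hAB : IsEffect (A + B)) : IsEffect A :=
  ⟨hA, by simpa [sub_add_eq_sub_sub] using hAB.2.add hB⟩

lemma smul (hE : IsEffect E) {c : ℂ} (hc₀ : 0 ≤ c) (hc₁ : c ≤ 1) : IsEffect (c • E) := by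
  refine ⟨hE.1.smul hc₀, ?_⟩
  have h : 1 - c • E = c • (1 - E) + (1 - c) • (1 : Matrix (Fin d) (Fin d) ℂ) := by module
  rw [h]
  exact (hE.2.smul hc₀).add (PosSemidef.one.smul (sub_nonneg.mpr hc₁))

lemma inv_natCast_smul (hE : IsEffect E) (n : ℕ) : IsEffect ((n : ℂ)⁻¹ • E) :=
  hE.smul (inv_nonneg.mpr (Nat.cast_nonneg n))
    (by simpa using Complex.real_le_real.2 (Nat.cast_inv_le_one n : (n : ℝ)⁻¹ ≤ 1))

end IsEffect

namespace IsFrameFunction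

variable {d : ℕ} {f : Matrix (Fin d) (Fin d) ℂ → ℝ}

lemma map_add (hf : IsFrameFunction f) {A B : Matrix (Fin d) (Fin d) ℂ} (hA : IsEffect A)
    (hB : IsEffect B) (hAB : IsEffect (A + B)) : f (A + B) = f A + f B := by
  have hC := hAB.one_sub
  have h₃ := hf.2 3 ![A, B, 1 - (A + B)] (fun i => by fin_cases i <;> assumption)
    (by simp [Fin.sum_univ_three])
  have h₂ := hf.2 2 ![A + B, 1 - (A + B)] (Fin.forall_fin_two.2 ⟨hAB, hC⟩)
    (by simp [Fin.sum_univ_two])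
  simp only [Fin.sum_univ_three, Fin.sum_univ_two, Matrix.cons_val_zero, Matrix.cons_val_one,
    Matrix.cons_val_two, Matrix.tail_cons, Matrix.head_cons] at h₃ h₂
  linarith

lemma map_zero (hf : IsFrameFunction f) : f 0 = 0 := by
  have h := hf.map_add IsEffect.zero IsEffect.zero (by simpa using IsEffect.zero)
  simp only [add_zero] at h
  linarith

lemma map_natCast_smul (hf : IsFrameFunction f) {G : Matrix (Fin d) (Fin d) ℂ}
    (hG : IsEffect G) (n : ℕ) (hnG : IsEffect ((n : ℂ) • G)) : f ((n : ℂ) • G) = n * f G := by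
  induction n with
  | zero => simp [hf.map_zero]
  | succ n ih =>
    have hsucc : ((n + 1 : ℕ) : ℂ) • G = (n : ℂ) • G + G := by push_cast; module
    rw [hsucc] at hnG ⊢
    have hn : IsEffect ((n : ℂ) • G) := .of_add (hG.1.smul (Nat.cast_nonneg n)) hG.1 hnG
    rw [hf.map_add hn hG hnG, ih hn]
    push_cast
    ring

lemma map_inv_natCast_smul (hf : IsFrameFunction f) {E : Matrix (Fin d) (Fin d) ℂ}
    (hE : IsEffect E) {n : ℕ} (hn : n ≠ 0) : f ((n : ℂ)⁻¹ • E) = f E / n := by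
  have h := hf.map_natCast_smul (hE.inv_natCast_smul n) n
  rw [smul_smul, mul_inv_cancel₀ (Nat.cast_ne_zero.mpr hn), one_smul] at h
  rw [h hE]
  field_simp

end IsFrameFunction

theorem frame_function_rat_homogeneous_general (d : ℕ)
    (f : Matrix (Fin d) (Fin d) ℂ → ℝ) (hf : IsFrameFunction f)
    (E : Matrix (Fin d) (Fin d) ℂ) (hE : IsEffect E)
    (q : ℚ) (hq : 0 ≤ q) (hqE : IsEffect ((q : ℂ) • E)) :
    f ((q : ℂ) • E) = q * f E := by
  obtain ⟨a, ha⟩ := Int.eq_ofNat_of_zero_le (Rat.num_nonneg.mpr hq)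
  have hq_div (K : Type) [DivisionRing K] : (q : K) = a / q.den := by
    rw [Rat.cast_def, ha, Int.cast_natCast]
  have hqE_eq : (q : ℂ) • E = (a : ℂ) • ((q.den : ℂ)⁻¹ • E) := by
    rw [smul_smul, hq_div, div_eq_mul_inv]
  rw [hqE_eq] at hqE ⊢
  rw [hf.map_natCast_smul (hE.inv_natCast_smul q.den) a hqE,
    hf.map_inv_natCast_smul hE q.den_nz, hq_div]
  ring

/-- A frame function is homogeneous over the nonnegative rationals. -/
theorem frame_function_rat_homogeneous (d : ℕ) (hd : 2 ≤ d)
    (f : Matrix (Fin d) (Fin d) ℂ → ℝ) (hf : IsFrameFunction f)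
    (E : Matrix (Fin d) (Fin d) ℂ) (hE : IsEffect E)
    (q : ℚ) (hq : 0 ≤ q) (hqE : IsEffect ((q : ℂ) • E)) :
    f ((q : ℂ) • E) = q * f E :=
  frame_function_rat_homogeneous_general d f hf E hE q hq hqE
end

section
/- Let f be a frame function on quantum effects that is additive and monotone in the sense that E ≤ F implies f(E) ≤ f(F) (which follows from additivity and nonnegativity). Then f is homogeneous over nonnegative reals: for every effect E and real c ∈ [0,1], f(cE) = c f(E). -/
open Matrix
open scoped ComplexOrder

/-! The map `t ↦ f (t • E)` is monotone on `[0, 1]` and equals `t ↦ t * f E` at the rational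
points, so approximating `c` by the rationals `⌊c n⌋ / n ≤ c ≤ ⌈c n⌉ / n` squeezes
`f (c • E)` to `c * f E`. -/

open Filter Topology Set

theorem MonotoneOn.eq_mul_of_eq_mul_ratCast {φ : ℝ → ℝ} {b : ℝ}
    (hφ : MonotoneOn φ (Icc 0 1)) (hrat : ∀ q : ℚ, (q : ℝ) ∈ Icc 0 1 → φ q = q * b)
    {c : ℝ} (hc : c ∈ Icc 0 1) : φ c = c * b := by
  have hfrac : ∀ m n : ℕ, (m / n : ℝ) ∈ Icc 0 1 → φ (m / n) = m / n * b := fun m n h => by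
    simpa using hrat (m / n) (by simpa using h)
  have hlim : ∀ {u : ℝ → ℝ}, Tendsto u atTop (𝓝 c) →
      Tendsto (fun n : ℕ => u n * b) atTop (𝓝 (c * b)) := fun hu =>
    (hu.comp tendsto_natCast_atTop_atTop).mul_const b
  have hpos : ∀ᶠ n : ℕ in atTop, (0 : ℝ) < n :=
    (eventually_gt_atTop 0).mono fun _ => Nat.cast_pos.mpr
  apply le_antisymm
  · refine le_of_tendsto_of_tendsto tendsto_const_nhds
      (hlim (tendsto_nat_ceil_mul_div_atTop hc.1)) (hpos.mono fun n hn => ?_)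
    have hcr : c ≤ ⌈c * n⌉₊ / n := by
      rw [le_div_iff₀ hn]; exact Nat.le_ceil _
    have hr1 : (⌈c * n⌉₊ / n : ℝ) ≤ 1 := by
      rw [div_le_one hn]; exact_mod_cast Nat.ceil_le.mpr (mul_le_of_le_one_left hn.le hc.2)
    have hr : (⌈c * n⌉₊ / n : ℝ) ∈ Icc 0 1 := ⟨hc.1.trans hcr, hr1⟩
    calc φ c ≤ φ (⌈c * n⌉₊ / n) := hφ hc hr hcr
      _ = ⌈c * n⌉₊ / n * b := hfrac _ _ hr
  · refine le_of_tendsto_of_tendsto (hlim (tendsto_nat_floor_mul_div_atTop hc.1))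
      tendsto_const_nhds (hpos.mono fun n hn => ?_)
    have hqc : (⌊c * n⌋₊ / n : ℝ) ≤ c := by
      rw [div_le_iff₀ hn]; exact Nat.floor_le (mul_nonneg hc.1 hn.le)
    have hq : (⌊c * n⌋₊ / n : ℝ) ∈ Icc 0 1 := ⟨by positivity, hqc.trans hc.2⟩
    calc ⌊c * n⌋₊ / n * b = φ (⌊c * n⌋₊ / n) := (hfrac _ _ hq).symm
      _ ≤ φ c := hφ hq hc hqc

theorem IsEffect.real_smul {d : ℕ} {E : Matrix (Fin d) (Fin d) ℂ} (hE : IsEffect E)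
    {t : ℝ} (ht : t ∈ Icc 0 1) : IsEffect ((t : ℂ) • E) := by
  obtain ⟨ht0, ht1⟩ := ht
  refine ⟨hE.1.smul (Complex.zero_le_real.mpr ht0), ?_⟩
  have hsplit : (1 : Matrix (Fin d) (Fin d) ℂ) - (t : ℂ) • E
      = ((1 - t : ℝ) : ℂ) • (1 : Matrix (Fin d) (Fin d) ℂ) + (t : ℂ) • (1 - E) := by
    push_cast
    rw [smul_sub, sub_smul, one_smul]
    abel
  rw [hsplit]
  exact (PosSemidef.one.smul (Complex.zero_le_real.mpr (by linarith))).add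
    (hE.2.smul (Complex.zero_le_real.mpr ht0))

theorem monotoneOn_apply_real_smul {d : ℕ} {f : Matrix (Fin d) (Fin d) ℂ → ℝ}
    (hmono : ∀ E F, IsEffect E → IsEffect F → (F - E).PosSemidef → f E ≤ f F)
    {E : Matrix (Fin d) (Fin d) ℂ} (hE : IsEffect E) :
    MonotoneOn (fun t : ℝ => f ((t : ℂ) • E)) (Icc 0 1) := by
  intro s hs t ht hst
  refine hmono _ _ (hE.real_smul hs) (hE.real_smul ht) ?_
  rw [← sub_smul, ← Complex.ofReal_sub]
  exact hE.1.smul (Complex.zero_le_real.mpr (sub_nonneg.mpr hst))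

theorem frame_function_real_homogeneous_general (d : ℕ)
    (f : Matrix (Fin d) (Fin d) ℂ → ℝ)
    (hmono : ∀ E F, IsEffect E → IsEffect F → (F - E).PosSemidef → f E ≤ f F)
    (hrat : ∀ (E : Matrix (Fin d) (Fin d) ℂ) (q : ℚ), IsEffect E → 0 ≤ q →
      IsEffect ((q : ℂ) • E) → f ((q : ℂ) • E) = q * f E)
    (E : Matrix (Fin d) (Fin d) ℂ) (hE : IsEffect E)
    (c : ℝ) (hc : c ∈ Set.Icc (0 : ℝ) 1) :
    f ((c : ℂ) • E) = c * f E := by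
  refine (monotoneOn_apply_real_smul hmono hE).eq_mul_of_eq_mul_ratCast (fun q hq => ?_) hc
  have hqE : IsEffect ((q : ℂ) • E) := by simpa using hE.real_smul hq
  simpa using hrat E q hE (by exact_mod_cast hq.1) hqE

/-- A frame function that is additive, monotone (in the Loewner order on effects) and
homogeneous over the nonnegative rationals is homogeneous over the reals in `[0,1]`. -/
theorem frame_function_real_homogeneous (d : ℕ) (hd : 2 ≤ d)
    (f : Matrix (Fin d) (Fin d) ℂ → ℝ) (hf : IsFrameFunction f)
    (hadd : ∀ E₁ E₂, IsEffect E₁ → IsEffect E₂ → IsEffect (E₁ + E₂) →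
      f (E₁ + E₂) = f E₁ + f E₂)
    (hmono : ∀ E F, IsEffect E → IsEffect F → (F - E).PosSemidef → f E ≤ f F)
    (hrat : ∀ (E : Matrix (Fin d) (Fin d) ℂ) (q : ℚ), IsEffect E → 0 ≤ q →
      IsEffect ((q : ℂ) • E) → f ((q : ℂ) • E) = q * f E)
    (E : Matrix (Fin d) (Fin d) ℂ) (hE : IsEffect E)
    (c : ℝ) (hc : c ∈ Set.Icc (0 : ℝ) 1) :
    f ((c : ℂ) • E) = c * f E :=
  frame_function_real_homogeneous_general d f hmono hrat E hE c hc
end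

section
/- Let f be a real-linear functional on the Hermitian operators of a finite-dimensional Hilbert space such that f(E) ≥ 0 for all effects E and ∑_{E∈X} f(E) = 1 for every POVM X. Then there exists a unique positive semidefinite operator ρ with trace 1 such that f(E) = Tr(ρE) for all effects E. -/
open Matrix
open scoped ComplexOrder

/-!
Extend `f` complex-linearly to all matrices by `F A = f (ℜ A) + i f (ℑ A)`. Every linear
functional on matrices is `A ↦ Tr (ρ A)` for `ρ i j = F (single j i 1)`, and `ρ` is Hermitian
because `F` commutes with the adjoint; the one-element POVM `{1}` gives `Tr ρ = 1`. A rank-one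
matrix `x xᴴ` is a nonnegative multiple of a projection, hence of an effect, so `xᴴ ρ x ≥ 0`.
The same observation shows that a Hermitian matrix is determined by its expectation values on
effects, which gives uniqueness.
-/

section Complexify

open Complex ComplexStarModule

variable {A : Type*} [AddCommGroup A] [Module ℂ A] [StarAddMonoid A] [StarModule ℂ A]

noncomputable def LinearMap.complexifySelfAdjoint (f : selfAdjoint A →ₗ[ℝ] ℝ) : A →ₗ[ℂ] ℂ where
  toFun a := f (ℜ a) + I * f (ℑ a)
  map_add' a b := by simp only [map_add]; push_cast; ring
  map_smul' z a := by
    rw [realPart_smul, imaginaryPart_smul]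
    simp only [map_add, map_sub, map_smul, smul_eq_mul, RingHom.id_apply]
    push_cast
    conv_rhs => rw [← re_add_im z]
    ring_nf
    rw [I_sq]; ring

variable (f : selfAdjoint A →ₗ[ℝ] ℝ)

@[simp]
theorem LinearMap.complexifySelfAdjoint_coe (x : selfAdjoint A) :
    f.complexifySelfAdjoint (x : A) = f x := by
  simp [LinearMap.complexifySelfAdjoint]

theorem LinearMap.complexifySelfAdjoint_star (a : A) :
    f.complexifySelfAdjoint (star a) = star (f.complexifySelfAdjoint a) := by
  have hre : ℜ (star a) = ℜ a := by ext; simp [realPart_apply_coe, add_comm]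
  have him : ℑ (star a) = -ℑ a := by ext; simp [imaginaryPart_apply_coe, smul_sub]
  simp only [LinearMap.complexifySelfAdjoint, LinearMap.coe_mk, AddHom.coe_mk, hre, him,
    map_neg, star_add, star_mul', Complex.star_def, conj_ofReal, conj_I]
  push_cast; ring

end Complexify

namespace Matrix

section TraceDual

variable {n R : Type*} [DecidableEq n] [CommSemiring R]

def traceDual (F : Matrix n n R →ₗ[R] R) : Matrix n n R :=
  of fun i j => F (single j i 1)

theorem trace_traceDual_mul [Fintype n] (F : Matrix n n R →ₗ[R] R) (A : Matrix n n R) :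
    (traceDual F * A).trace = F A := by
  suffices traceLinearMap n R R ∘ₗ LinearMap.mulLeft R (traceDual F) = F from
    LinearMap.congr_fun this A
  refine ext_linearMap R fun i j => LinearMap.ext_ring ?_
  simp [trace_mul_single, traceDual]

theorem isHermitian_traceDual [StarRing R] (F : Matrix n n R →ₗ[R] R)
    (hF : ∀ A, F Aᴴ = star (F A)) : (traceDual F).IsHermitian := by
  ext i j
  simp [traceDual, ← hF, conjTranspose_single]

end TraceDual

theorem trace_mul_vecMulVec_self {n R : Type*} [Fintype n] [CommSemiring R] [StarRing R]
    (M : Matrix n n R) (x : n → R) :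
    (M * vecMulVec x (star x)).trace = star x ⬝ᵥ (M *ᵥ x) := by
  rw [mul_vecMulVec, trace_vecMulVec, dotProduct_comm]

end Matrix

section Effect

open scoped MatrixOrder

variable {d : ℕ}

theorem isEffect_iff {E : Matrix (Fin d) (Fin d) ℂ} : IsEffect E ↔ 0 ≤ E ∧ E ≤ 1 := by
  rw [IsEffect, nonneg_iff_posSemidef, le_iff]

theorem IsStarProjection.isEffect {E : Matrix (Fin d) (Fin d) ℂ} (hE : IsStarProjection E) :
    IsEffect E :=
  isEffect_iff.2 ⟨hE.nonneg, hE.le_one⟩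

theorem exists_vecMulVec_self_star_eq_smul_effect (x : Fin d → ℂ) :
    ∃ (c : ℝ) (P : Matrix (Fin d) (Fin d) ℂ), 0 ≤ c ∧ IsEffect P ∧
      vecMulVec x (star x) = (c : ℂ) • P := by
  have hxx := dotProduct_star_self_nonneg x
  set c := (star x ⬝ᵥ x).re
  have hc : star x ⬝ᵥ x = c := Complex.eq_re_of_ofReal_le (r := 0) (by rwa [Complex.ofReal_zero])
  rcases eq_or_ne c 0 with hc0 | hc0
  · have hx : x = 0 := dotProduct_star_self_eq_zero.1 (by rw [hc, hc0, Complex.ofReal_zero])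
    exact ⟨0, 0, le_rfl, IsStarProjection.isEffect (.zero _), by simp [hx]⟩
  have hM := (posSemidef_vecMulVec_self_star x).isHermitian
  refine ⟨c, (c⁻¹ : ℂ) • vecMulVec x (star x), (Complex.nonneg_iff.1 hxx).1, ?_, ?_⟩
  · refine IsStarProjection.isEffect ⟨?_, ?_⟩
    · rw [IsIdempotentElem, smul_mul_smul, vecMulVec_mul_vecMulVec, hc, vecMulVec_smul, smul_smul]
      congr 1
      field_simp
    · simp [IsSelfAdjoint, star_smul, star_eq_conjTranspose, hM.eq]
  · rw [smul_smul, mul_inv_cancel₀ (by exact_mod_cast hc0), one_smul]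

theorem posSemidef_of_re_trace_mul_effect_nonneg {ρ : Matrix (Fin d) (Fin d) ℂ}
    (hρ : ρ.IsHermitian) (h : ∀ E, IsEffect E → 0 ≤ (ρ * E).trace.re) : ρ.PosSemidef := by
  refine posSemidef_iff_dotProduct_mulVec.2 ⟨hρ, fun x => ?_⟩
  obtain ⟨c, P, hc, hP, hxP⟩ := exists_vecMulVec_self_star_eq_smul_effect x
  have hre : (star x ⬝ᵥ (ρ *ᵥ x)).re = c * (ρ * P).trace.re := by
    rw [← trace_mul_vecMulVec_self, hxP, Matrix.mul_smul, trace_smul, smul_eq_mul,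
      Complex.re_ofReal_mul]
  exact Complex.nonneg_iff.2 ⟨hre ▸ mul_nonneg hc (h P hP),
    (hρ.im_star_dotProduct_mulVec_self x).symm⟩

theorem Matrix.IsHermitian.eq_of_re_trace_mul_effect_eq {σ ρ : Matrix (Fin d) (Fin d) ℂ}
    (hσ : σ.IsHermitian) (hρ : ρ.IsHermitian)
    (h : ∀ E, IsEffect E → (σ * E).trace.re = (ρ * E).trace.re) : σ = ρ := by
  refine le_antisymm (posSemidef_of_re_trace_mul_effect_nonneg (hρ.sub hσ) fun E hE => ?_)
    (posSemidef_of_re_trace_mul_effect_nonneg (hσ.sub hρ) fun E hE => ?_) <;>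
  simp [sub_mul, h E hE]

end Effect

theorem linear_frame_function_is_born_rule_general (d : ℕ)
    (f : selfAdjoint (Matrix (Fin d) (Fin d) ℂ) →ₗ[ℝ] ℝ)
    (hpos : ∀ E : selfAdjoint (Matrix (Fin d) (Fin d) ℂ),
      IsEffect (E : Matrix (Fin d) (Fin d) ℂ) → 0 ≤ f E)
    (hnorm : ∀ (n : ℕ) (X : Fin n → selfAdjoint (Matrix (Fin d) (Fin d) ℂ)),
      (∀ i, IsEffect (X i : Matrix (Fin d) (Fin d) ℂ)) →
      (∑ i, (X i : Matrix (Fin d) (Fin d) ℂ)) = 1 → ∑ i, f (X i) = 1) :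
    ∃! ρ : Matrix (Fin d) (Fin d) ℂ, ρ.PosSemidef ∧ ρ.trace = 1 ∧
      ∀ E : selfAdjoint (Matrix (Fin d) (Fin d) ℂ),
        IsEffect (E : Matrix (Fin d) (Fin d) ℂ) →
        f E = ((ρ * (E : Matrix (Fin d) (Fin d) ℂ)).trace).re := by
  set ρ := traceDual f.complexifySelfAdjoint
  have hρ : ∀ E : selfAdjoint (Matrix (Fin d) (Fin d) ℂ), (ρ * E).trace = f E := fun E =>
    (trace_traceDual_mul _ _).trans (f.complexifySelfAdjoint_coe E)
  have hρ_herm : ρ.IsHermitian :=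
    isHermitian_traceDual _ f.complexifySelfAdjoint_star
  have hf_one : f 1 = 1 := by
    simpa using hnorm 1 (fun _ => 1) (fun _ => IsStarProjection.isEffect (.one _)) (by simp)
  refine ⟨ρ, ⟨?_, ?_, fun E _ => by rw [hρ, Complex.ofReal_re]⟩, ?_⟩
  · refine posSemidef_of_re_trace_mul_effect_nonneg hρ_herm fun E hE => ?_
    simpa [hρ ⟨E, hE.1.1⟩] using hpos ⟨E, hE.1.1⟩ hE
  · simpa [hf_one] using hρ 1
  · rintro σ ⟨hσ, -, hσ_rep⟩
    refine hσ.1.eq_of_re_trace_mul_effect_eq hρ_herm fun E hE => ?_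
    rw [← hσ_rep ⟨E, hE.1.1⟩ hE, hρ ⟨E, hE.1.1⟩, Complex.ofReal_re]

/-- Gleason-type representation: a real-linear functional on Hermitian operators that is
nonnegative on effects and normalized over every POVM is represented by a unique density
matrix via the Hilbert–Schmidt inner product (Born rule). -/
theorem linear_frame_function_is_born_rule (d : ℕ) (hd : 2 ≤ d)
    (f : selfAdjoint (Matrix (Fin d) (Fin d) ℂ) →ₗ[ℝ] ℝ)
    (hpos : ∀ E : selfAdjoint (Matrix (Fin d) (Fin d) ℂ),
      IsEffect (E : Matrix (Fin d) (Fin d) ℂ) → 0 ≤ f E)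
    (hnorm : ∀ (n : ℕ) (X : Fin n → selfAdjoint (Matrix (Fin d) (Fin d) ℂ)),
      (∀ i, IsEffect (X i : Matrix (Fin d) (Fin d) ℂ)) →
      (∑ i, (X i : Matrix (Fin d) (Fin d) ℂ)) = 1 → ∑ i, f (X i) = 1) :
    ∃! ρ : Matrix (Fin d) (Fin d) ℂ, ρ.PosSemidef ∧ ρ.trace = 1 ∧
      ∀ E : selfAdjoint (Matrix (Fin d) (Fin d) ℂ),
        IsEffect (E : Matrix (Fin d) (Fin d) ℂ) →
        f E = ((ρ * (E : Matrix (Fin d) (Fin d) ℂ)).trace).re :=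
  linear_frame_function_is_born_rule_general d f hpos hnorm
end

section
/- Let f be a frame function for two local regions A and B: f maps pairs of completely positive trace-non-increasing maps to [0,1] and satisfies ∑_{M∈I_A, N∈I_B} f(M,N) = 1 for all instruments I_A, I_B (finite sets of CP maps summing to a CPTP map). Then f is additive in each argument: if M₁, M₂, and M₁+M₂ are CP trace-non-increasing and there exists a CP trace-non-increasing M₃ with M₁+M₂+M₃ trace-preserving, then for any CPTP map N̄, f(M₁+M₂, N̄) = f(M₁, N̄) + f(M₂, N̄). -/
open Matrix
open scoped ComplexOrder Kronecker

/-- The extension `(id_n ⊗ M)` of a linear map `M : L(H_a) → L(H_b)` by an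
`n`-dimensional ancilla. -/
noncomputable def tensorExt {a b : ℕ}
    (M : Matrix (Fin a) (Fin a) ℂ →ₗ[ℂ] Matrix (Fin b) (Fin b) ℂ) (n : ℕ)
    (ρ : Matrix (Fin n × Fin a) (Fin n × Fin a) ℂ) :
    Matrix (Fin n × Fin b) (Fin n × Fin b) ℂ :=
  Matrix.of fun p q => M (Matrix.of fun i j => ρ (p.1, i) (q.1, j)) p.2 q.2

/-- Complete positivity: every ancilla extension maps positive operators to
positive operators. -/
def IsCP {a b : ℕ}
    (M : Matrix (Fin a) (Fin a) ℂ →ₗ[ℂ] Matrix (Fin b) (Fin b) ℂ) : Prop :=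
  ∀ (n : ℕ) (ρ : Matrix (Fin n × Fin a) (Fin n × Fin a) ℂ),
    ρ.PosSemidef → (tensorExt M n ρ).PosSemidef

/-- Trace non-increasing on positive operators. -/
def IsTNI {a b : ℕ}
    (M : Matrix (Fin a) (Fin a) ℂ →ₗ[ℂ] Matrix (Fin b) (Fin b) ℂ) : Prop :=
  ∀ ρ : Matrix (Fin a) (Fin a) ℂ, ρ.PosSemidef → ((M ρ).trace).re ≤ (ρ.trace).re

/-- Trace preserving. -/
def IsTP {a b : ℕ}
    (M : Matrix (Fin a) (Fin a) ℂ →ₗ[ℂ] Matrix (Fin b) (Fin b) ℂ) : Prop :=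
  ∀ ρ : Matrix (Fin a) (Fin a) ℂ, (M ρ).trace = ρ.trace

/-- A completely positive trace-non-increasing map (a quantum operation / event). -/
def IsCPTN {a b : ℕ}
    (M : Matrix (Fin a) (Fin a) ℂ →ₗ[ℂ] Matrix (Fin b) (Fin b) ℂ) : Prop :=
  IsCP M ∧ IsTNI M

/-- A completely positive trace-preserving map (a quantum channel). -/
def IsCPTP {a b : ℕ}
    (M : Matrix (Fin a) (Fin a) ℂ →ₗ[ℂ] Matrix (Fin b) (Fin b) ℂ) : Prop :=
  IsCP M ∧ IsTP M

/-- An instrument: a finite family of CP trace-non-increasing maps summing to a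
trace-preserving (CPTP) map. -/
def IsInstrument {a b n : ℕ}
    (I : Fin n → (Matrix (Fin a) (Fin a) ℂ →ₗ[ℂ] Matrix (Fin b) (Fin b) ℂ)) : Prop :=
  (∀ i, IsCPTN (I i)) ∧ IsTP (∑ i, I i)

/-
Coarse-graining the instrument `(M₁, M₂, M₃)` into `(M₁ + M₂, M₃)` and pairing both with the
one-outcome instrument `(N̄)` gives `f M₁ N̄ + f M₂ N̄ + f M₃ N̄ = 1 = f (M₁ + M₂) N̄ + f M₃ N̄`.
-/

section Instruments

variable {a b : ℕ}

theorem IsCPTP.isCPTN {N : Matrix (Fin a) (Fin a) ℂ →ₗ[ℂ] Matrix (Fin b) (Fin b) ℂ}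
    (hN : IsCPTP N) : IsCPTN N :=
  ⟨hN.1, fun ρ _ => (congrArg Complex.re (hN.2 ρ)).le⟩

theorem IsCPTP.isInstrument_const {N : Matrix (Fin a) (Fin a) ℂ →ₗ[ℂ] Matrix (Fin b) (Fin b) ℂ}
    (hN : IsCPTP N) : IsInstrument (fun _ : Fin 1 => N) :=
  ⟨fun _ => hN.isCPTN, by simpa using hN.2⟩

theorem isInstrument_pair {M₁ M₂ : Matrix (Fin a) (Fin a) ℂ →ₗ[ℂ] Matrix (Fin b) (Fin b) ℂ}
    (h₁ : IsCPTN M₁) (h₂ : IsCPTN M₂) (hTP : IsTP (M₁ + M₂)) : IsInstrument ![M₁, M₂] := by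
  refine ⟨Fin.forall_fin_two.2 ⟨h₁, h₂⟩, ?_⟩
  simpa [Fin.sum_univ_two] using hTP

theorem isInstrument_triple
    {M₁ M₂ M₃ : Matrix (Fin a) (Fin a) ℂ →ₗ[ℂ] Matrix (Fin b) (Fin b) ℂ}
    (h₁ : IsCPTN M₁) (h₂ : IsCPTN M₂) (h₃ : IsCPTN M₃) (hTP : IsTP (M₁ + M₂ + M₃)) :
    IsInstrument ![M₁, M₂, M₃] := by
  refine ⟨fun i => ?_, ?_⟩
  · fin_cases i
    exacts [h₁, h₂, h₃]
  · simpa [Fin.sum_univ_three] using hTP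

end Instruments

theorem process_frame_function_additive_general (aI aO bI bO : ℕ)
    (f : (Matrix (Fin aI) (Fin aI) ℂ →ₗ[ℂ] Matrix (Fin aO) (Fin aO) ℂ) →
         (Matrix (Fin bI) (Fin bI) ℂ →ₗ[ℂ] Matrix (Fin bO) (Fin bO) ℂ) → ℝ)
    (hnorm : ∀ (n m : ℕ)
      (IA : Fin n → (Matrix (Fin aI) (Fin aI) ℂ →ₗ[ℂ] Matrix (Fin aO) (Fin aO) ℂ))
      (IB : Fin m → (Matrix (Fin bI) (Fin bI) ℂ →ₗ[ℂ] Matrix (Fin bO) (Fin bO) ℂ)),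
      IsInstrument IA → IsInstrument IB → ∑ i, ∑ j, f (IA i) (IB j) = 1)
    (M₁ M₂ M₃ : Matrix (Fin aI) (Fin aI) ℂ →ₗ[ℂ] Matrix (Fin aO) (Fin aO) ℂ)
    (h₁ : IsCPTN M₁) (h₂ : IsCPTN M₂) (h₁₂ : IsCPTN (M₁ + M₂)) (h₃ : IsCPTN M₃)
    (hcomplete : IsTP (M₁ + M₂ + M₃))
    (Nbar : Matrix (Fin bI) (Fin bI) ℂ →ₗ[ℂ] Matrix (Fin bO) (Fin bO) ℂ)
    (hN : IsCPTP Nbar) :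
    f (M₁ + M₂) Nbar = f M₁ Nbar + f M₂ Nbar := by
  have fine := hnorm 3 1 _ _ (isInstrument_triple h₁ h₂ h₃ hcomplete) hN.isInstrument_const
  have coarse := hnorm 2 1 _ _ (isInstrument_pair h₁₂ h₃ hcomplete) hN.isInstrument_const
  simp only [Fin.sum_univ_three, Fin.sum_univ_two, Finset.univ_unique, Finset.sum_singleton,
    Matrix.cons_val_zero, Matrix.cons_val_one, Matrix.cons_val_two, Matrix.tail_cons,
    Matrix.head_cons] at fine coarse
  linarith

/-- A process frame function (normalized over all pairs of instruments) is additive in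
each argument. -/
theorem process_frame_function_additive (aI aO bI bO : ℕ)
    (f : (Matrix (Fin aI) (Fin aI) ℂ →ₗ[ℂ] Matrix (Fin aO) (Fin aO) ℂ) →
         (Matrix (Fin bI) (Fin bI) ℂ →ₗ[ℂ] Matrix (Fin bO) (Fin bO) ℂ) → ℝ)
    (hrange : ∀ M N, IsCPTN M → IsCPTN N → f M N ∈ Set.Icc (0 : ℝ) 1)
    (hnorm : ∀ (n m : ℕ)
      (IA : Fin n → (Matrix (Fin aI) (Fin aI) ℂ →ₗ[ℂ] Matrix (Fin aO) (Fin aO) ℂ))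
      (IB : Fin m → (Matrix (Fin bI) (Fin bI) ℂ →ₗ[ℂ] Matrix (Fin bO) (Fin bO) ℂ)),
      IsInstrument IA → IsInstrument IB → ∑ i, ∑ j, f (IA i) (IB j) = 1)
    (M₁ M₂ M₃ : Matrix (Fin aI) (Fin aI) ℂ →ₗ[ℂ] Matrix (Fin aO) (Fin aO) ℂ)
    (h₁ : IsCPTN M₁) (h₂ : IsCPTN M₂) (h₁₂ : IsCPTN (M₁ + M₂)) (h₃ : IsCPTN M₃)
    (hcomplete : IsTP (M₁ + M₂ + M₃))
    (Nbar : Matrix (Fin bI) (Fin bI) ℂ →ₗ[ℂ] Matrix (Fin bO) (Fin bO) ℂ)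
    (hN : IsCPTP Nbar) :
    f (M₁ + M₂) Nbar = f M₁ Nbar + f M₂ Nbar :=
  process_frame_function_additive_general aI aO bI bO f hnorm M₁ M₂ M₃ h₁ h₂ h₁₂ h₃ hcomplete Nbar
    hN
end
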